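/- Correctness of where-provenance extraction: if |γ̂|, e ⇓ v, T (i.e., the expression e evaluates in the erased environment |γ̂| to value v producing trace T), then the set of non-⊥ annotations occurring in the where-provenance extraction W(T, γ̂) is a subset of the set of non-⊥ annotations occurring in the annotated environment γ̂, that is, occ^{¬⊥}(W(T, γ̂)) ⊆ occ^{¬⊥}(γ̂). -/

import Mathlib

namespace Prov

abbrev Var := String
abbrev Loc := ℕ

/-- Expressions of the call-by-value core calculus. -/
inductive Expr : Type where
  | var : Var → Expr
  | const : ℕ → Expr
  | prim : String → List Expr → Expr
  | pair : Expr → Expr → Expr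
  | fst : Expr → Expr
  | snd : Expr → Expr
  | inl : Expr → Expr
  | inr : Expr → Expr
  | case : Expr → Var → Expr → Var → Expr → Expr
  | fn : Var → Var → Expr → Expr
  | app : Expr → Expr → Expr
  | roll : Expr → Expr
  | unroll : Expr → Expr
  | letin : Var → Expr → Expr → Expr

/-- Values; closures record a recursive function `fun f(x).e` and an environment. -/
inductive Val : Type where
  | const : ℕ → Val
  | pair : Val → Val → Val
  | inl : Val → Val
  | inr : Val → Val
  | roll : Val → Val
  | closure : Var → Var → Expr → (Var → Val) → Val

abbrev Env := Var → Val

def upd {α : Type} (γ : Var → α) (x : Var) (v : α) : Var → α :=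
  fun y => if y = x then v else γ y

/-- Traces (possibly containing holes, used for trace slices). -/
inductive Trace : Type where
  | hole : Trace
  | var : Var → Trace
  | const : ℕ → Trace
  | prim : String → List Trace → Trace
  | letT : Trace → Var → Trace → Trace
  | pair : Trace → Trace → Trace
  | fst : Trace → Trace
  | snd : Trace → Trace
  | inl : Trace → Trace
  | inr : Trace → Trace
  | caseL : Trace → Var → Expr → Var → Expr → Trace → Trace
  | caseR : Trace → Var → Expr → Var → Expr → Trace → Trace
  | fn : Var → Var → Expr → Trace
  | app : Var → Var → Expr → Trace → Trace → Trace → Trace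
  | roll : Trace → Trace
  | unroll : Trace → Trace

mutual
/-- Tracing evaluation judgment `γ, e ⇓ v, T`, parameterized by the semantic
interpretation `ps` of primitive operations (which return constants). -/
inductive Eval (ps : String → List Val → ℕ) : Env → Expr → Val → Trace → Prop where
  | var : Eval ps γ (.var x) (γ x) (.var x)
  | const : Eval ps γ (.const c) (.const c) (.const c)
  | prim : EvalList ps γ es vs Ts → Eval ps γ (.prim op es) (.const (ps op vs)) (.prim op Ts)
  | pair : Eval ps γ e1 v1 T1 → Eval ps γ e2 v2 T2 →
      Eval ps γ (.pair e1 e2) (.pair v1 v2) (.pair T1 T2)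
  | fst : Eval ps γ e (.pair v1 v2) T → Eval ps γ (.fst e) v1 (.fst T)
  | snd : Eval ps γ e (.pair v1 v2) T → Eval ps γ (.snd e) v2 (.snd T)
  | inl : Eval ps γ e v T → Eval ps γ (.inl e) (.inl v) (.inl T)
  | inr : Eval ps γ e v T → Eval ps γ (.inr e) (.inr v) (.inr T)
  | caseL : Eval ps γ e (.inl v) T → Eval ps (upd γ x1 v) e1 v1 T1 →
      Eval ps γ (.case e x1 e1 x2 e2) v1 (.caseL T x1 e1 x2 e2 T1)
  | caseR : Eval ps γ e (.inr v) T → Eval ps (upd γ x2 v) e2 v2 T2 →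
      Eval ps γ (.case e x1 e1 x2 e2) v2 (.caseR T x1 e1 x2 e2 T2)
  | fn : Eval ps γ (.fn f x e) (.closure f x e γ) (.fn f x e)
  | app : Eval ps γ e1 (.closure f x e γ0) T1 → Eval ps γ e2 v2 T2 →
      Eval ps (upd (upd γ0 x v2) f (.closure f x e γ0)) e v T →
      Eval ps γ (.app e1 e2) v (.app f x e T1 T2 T)
  | roll : Eval ps γ e v T → Eval ps γ (.roll e) (.roll v) (.roll T)
  | unroll : Eval ps γ e (.roll v) T → Eval ps γ (.unroll e) v (.unroll T)
  | letin : Eval ps γ e1 v1 T1 → Eval ps (upd γ x v1) e2 v2 T2 →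
      Eval ps γ (.letin x e1 e2) v2 (.letT T1 x T2)

inductive EvalList (ps : String → List Val → ℕ) : Env → List Expr → List Val → List Trace → Prop where
  | nil : EvalList ps γ [] [] []
  | cons : Eval ps γ e v T → EvalList ps γ es vs Ts →
      EvalList ps γ (e :: es) (v :: vs) (T :: Ts)
end

mutual
/-- Replay judgment `γ, T ↷ v`. -/
inductive Replay (ps : String → List Val → ℕ) : Env → Trace → Val → Prop where
  | var : Replay ps γ (.var x) (γ x)
  | const : Replay ps γ (.const c) (.const c)
  | prim : ReplayList ps γ Ts vs → Replay ps γ (.prim op Ts) (.const (ps op vs))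
  | pair : Replay ps γ T1 v1 → Replay ps γ T2 v2 → Replay ps γ (.pair T1 T2) (.pair v1 v2)
  | fst : Replay ps γ T (.pair v1 v2) → Replay ps γ (.fst T) v1
  | snd : Replay ps γ T (.pair v1 v2) → Replay ps γ (.snd T) v2
  | inl : Replay ps γ T v → Replay ps γ (.inl T) (.inl v)
  | inr : Replay ps γ T v → Replay ps γ (.inr T) (.inr v)
  | caseL : Replay ps γ T (.inl v) → Replay ps (upd γ x1 v) T1 v1 →
      Replay ps γ (.caseL T x1 e1 x2 e2 T1) v1
  | caseR : Replay ps γ T (.inr v) → Replay ps (upd γ x2 v) T2 v2 →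
      Replay ps γ (.caseR T x1 e1 x2 e2 T2) v2
  | fn : Replay ps γ (.fn f x e) (.closure f x e γ)
  | app : Replay ps γ T1 (.closure f x e γ0) → Replay ps γ T2 v2 →
      Replay ps (upd (upd γ0 x v2) f (.closure f x e γ0)) T v →
      Replay ps γ (.app f x e T1 T2 T) v
  | roll : Replay ps γ T v → Replay ps γ (.roll T) (.roll v)
  | unroll : Replay ps γ T (.roll v) → Replay ps γ (.unroll T) v
  | letT : Replay ps γ T1 v1 → Replay ps (upd γ x v1) T2 v2 →
      Replay ps γ (.letT T1 x T2) v2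

inductive ReplayList (ps : String → List Val → ℕ) : Env → List Trace → List Val → Prop where
  | nil : ReplayList ps γ [] []
  | cons : Replay ps γ T v → ReplayList ps γ Ts vs → ReplayList ps γ (T :: Ts) (v :: vs)
end

/-- Values annotated (on every constructor) with annotations from `A`. -/
inductive AVal (A : Type) : Type where
  | const : ℕ → A → AVal A
  | pair : AVal A → AVal A → A → AVal A
  | inl : AVal A → A → AVal A
  | inr : AVal A → A → AVal A
  | roll : AVal A → A → AVal A
  | closure : Var → Var → Expr → (Var → AVal A) → A → AVal A

abbrev AEnv (A : Type) := Var → AVal A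

/-- Erasure of annotations. -/
def erase {A : Type} : AVal A → Val
  | .const c _ => .const c
  | .pair v1 v2 _ => .pair (erase v1) (erase v2)
  | .inl v _ => .inl (erase v)
  | .inr v _ => .inr (erase v)
  | .roll v _ => .roll (erase v)
  | .closure f x e ρ _ => .closure f x e (fun y => erase (ρ y))

def eraseEnv {A : Type} (γ : AEnv A) : Env := fun x => erase (γ x)

/-- Top-level annotation of an annotated value. -/
def annOf {A : Type} : AVal A → A
  | .const _ a => a
  | .pair _ _ a => a
  | .inl _ a => a
  | .inr _ a => a
  | .roll _ a => a
  | .closure _ _ _ _ a => a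


/-! ### Where-provenance -/

/-- Where-provenance annotations: either a source location or the trivial annotation `⊥`
(represented by `none`). -/
abbrev WAnn := Option Loc

/-- The set of non-`⊥` annotations of an `Option Loc` annotation. -/
def optOcc : WAnn → Set Loc := fun a => {l | a = some l}

/-- `occ^{¬⊥}`: the set of non-`⊥` annotations occurring anywhere in an annotated value. -/
def occ : AVal WAnn → Set Loc
  | .const _ a => optOcc a
  | .pair v1 v2 a => occ v1 ∪ occ v2 ∪ optOcc a
  | .inl v a => occ v ∪ optOcc a
  | .inr v a => occ v ∪ optOcc a
  | .roll v a => occ v ∪ optOcc a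
  | .closure _ _ _ ρ a => {l | ∃ y, l ∈ occ (ρ y)} ∪ optOcc a

/-- `occ^{¬⊥}` of an annotated environment (pointwise union). -/
def occEnv (γ : AEnv WAnn) : Set Loc := {l | ∃ x, l ∈ occ (γ x)}

mutual
/-- The where-provenance extraction function `W(T, γ̂)`, presented as a relation
`WEx ps T γ̂ v̂` meaning `W(T, γ̂) = v̂`.  It propagates annotations from `γ̂` through
replay of `T`; every newly constructed value is annotated `⊥` (i.e. `none`). -/
inductive WEx (ps : String → List Val → ℕ) : Trace → AEnv WAnn → AVal WAnn → Prop where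
  | var : WEx ps (.var x) γ (γ x)
  | const : WEx ps (.const c) γ (.const c none)
  | prim : WExList ps Ts γ vs →
      WEx ps (.prim op Ts) γ (.const (ps op (vs.map erase)) none)
  | pair : WEx ps T1 γ v1 → WEx ps T2 γ v2 → WEx ps (.pair T1 T2) γ (.pair v1 v2 none)
  | fst : WEx ps T γ (.pair v1 v2 a) → WEx ps (.fst T) γ v1
  | snd : WEx ps T γ (.pair v1 v2 a) → WEx ps (.snd T) γ v2
  | inl : WEx ps T γ v → WEx ps (.inl T) γ (.inl v none)
  | inr : WEx ps T γ v → WEx ps (.inr T) γ (.inr v none)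
  | caseL : WEx ps T γ (.inl v a) → WEx ps T1 (upd γ x1 v) v1 →
      WEx ps (.caseL T x1 e1 x2 e2 T1) γ v1
  | caseR : WEx ps T γ (.inr v a) → WEx ps T2 (upd γ x2 v) v2 →
      WEx ps (.caseR T x1 e1 x2 e2 T2) γ v2
  | fn : WEx ps (.fn f x e) γ (.closure f x e γ none)
  | app : WEx ps T1 γ (.closure f x e γ0 a) → WEx ps T2 γ v2 →
      WEx ps T (upd (upd γ0 x v2) f (.closure f x e γ0 a)) v →
      WEx ps (.app f x e T1 T2 T) γ v
  | roll : WEx ps T γ v → WEx ps (.roll T) γ (.roll v none)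
  | unroll : WEx ps T γ (.roll v a) → WEx ps (.unroll T) γ v
  | letT : WEx ps T1 γ v1 → WEx ps T2 (upd γ x v1) v2 → WEx ps (.letT T1 x T2) γ v2

inductive WExList (ps : String → List Val → ℕ) :
    List Trace → AEnv WAnn → List (AVal WAnn) → Prop where
  | nil : WExList ps [] γ []
  | cons : WEx ps T γ v → WExList ps Ts γ vs → WExList ps (T :: Ts) γ (v :: vs)
end

/-!
Extraction never invents a non-`⊥` annotation: every constructor it builds is annotated `⊥`,
and every other value it returns is a subvalue of a value already in the current environment.
The environments it extends along the way (case branches, `let`, function bodies) only bind such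
values, or closures whose environment is such a value's, so their annotations stay within
`occ^{¬⊥}(γ̂)` as well.
-/

@[simp]
lemma optOcc_none : optOcc none = ∅ := by
  ext
  simp [optOcc]

lemma occ_subset_occEnv (γ : AEnv WAnn) (x : Var) : occ (γ x) ⊆ occEnv γ :=
  fun _ hl => ⟨x, hl⟩

lemma occEnv_subset_occ_closure (f x : Var) (e : Expr) (ρ : AEnv WAnn) (a : WAnn) :
    occEnv ρ ⊆ occ (.closure f x e ρ a) :=
  Set.subset_union_left

lemma occEnv_upd_subset {S : Set Loc} {γ : AEnv WAnn} {x : Var} {v : AVal WAnn}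
    (hv : occ v ⊆ S) (hγ : occEnv γ ⊆ S) : occEnv (upd γ x v) ⊆ S := by
  rintro l ⟨y, hy⟩
  by_cases h : y = x
  · exact hv (by simpa [upd, h] using hy)
  · exact hγ ⟨y, by simpa [upd, h] using hy⟩

open Set in
theorem WEx.occ_subset {ps : String → List Val → ℕ} {T : Trace} {γ : AEnv WAnn}
    {v : AVal WAnn} (h : WEx ps T γ v) : occ v ⊆ occEnv γ := by
  -- The list motive can be trivial: a primitive operation returns a fresh `⊥`-annotated constant.
  induction h using WEx.rec (motive_2 := fun _ _ _ _ => True) with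
  | var => exact occ_subset_occEnv _ _
  | const | prim => simp [occ]
  | fn => simp [occ, occEnv]
  | pair _ _ ih₁ ih₂ => simpa [occ] using union_subset ih₁ ih₂
  | inl _ ih | inr _ ih | roll _ ih => simpa [occ] using ih
  | fst _ ih => exact (subset_union_left.trans subset_union_left).trans ih
  | snd _ ih => exact (subset_union_right.trans subset_union_left).trans ih
  | unroll _ ih => exact subset_union_left.trans ih
  | caseL _ _ ih ihBranch | caseR _ _ ih ihBranch =>
    exact ihBranch.trans (occEnv_upd_subset (subset_union_left.trans ih) subset_rfl)
  | letT _ _ ih ihBody => exact ihBody.trans (occEnv_upd_subset ih subset_rfl)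
  | app _ _ _ ihFun ihArg ihBody =>
    have hρ := (occEnv_subset_occ_closure ..).trans ihFun
    exact ihBody.trans (occEnv_upd_subset ihFun (occEnv_upd_subset ihArg hρ))
  | nil | cons => trivial

/-- **Correctness of where-provenance extraction** (Theorem `where`):
if `|γ̂|, e ⇓ v, T` then `occ^{¬⊥}(W(T, γ̂)) ⊆ occ^{¬⊥}(γ̂)`. -/
theorem where_provenance_correct
    (ps : String → List Val → ℕ) (γhat : AEnv WAnn) (e : Expr) (v : Val) (T : Trace)
    (vhat : AVal WAnn)
    (heval : Eval ps (eraseEnv γhat) e v T)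
    (hW : WEx ps T γhat vhat) :
    occ vhat ⊆ occEnv γhat := by
  exact hW.occ_subset

end Prov
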